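/- arXiv:2503.19089 — 5 statements merged into one kernel-verified Lean document; each statement's English description precedes it below -/
import Mathlib

section
/- For any χ-cursed posterior μ(θ|m) = F(θ)σ₁^χ(m|θ)/Σ_{θ'}F(θ')σ₁^χ(m|θ') derived from a totally mixed sender strategy, the posterior is bounded below: μ(θ|m) ≥ χF(θ) for every type θ and message m. -/
/-- The χ-cursed posterior is bounded below by χ times the prior (Proposition 2,
on-path case). -/
theorem cursed_posterior_lower_bound
    {Θ M : Type*} [Fintype Θ] [Fintype M]
    (F : Θ → ℝ) (σ₁ : Θ → M → ℝ) (χ : ℝ)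
    (hF : ∀ θ, 0 < F θ) (hFsum : ∑ θ, F θ = 1)
    (hσ : ∀ θ m, 0 < σ₁ θ m) (hσsum : ∀ θ, ∑ m, σ₁ θ m = 1)
    (hχ : χ ∈ Set.Icc (0:ℝ) 1)
    (σχ : Θ → M → ℝ)
    (hσχ : ∀ θ m, σχ θ m = χ * (∑ θ', F θ' * σ₁ θ' m) + (1 - χ) * σ₁ θ m)
    (μ : M → Θ → ℝ)
    (hμ : ∀ m θ, μ m θ = F θ * σχ θ m / ∑ θ', F θ' * σχ θ' m) :
    ∀ m θ, μ m θ ≥ χ * F θ := by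
  obtain ⟨hχ0, hχ1⟩ := hχ
  intro m θ
  have hne : (Finset.univ : Finset Θ).Nonempty := by
    by_contra h
    rw [Finset.not_nonempty_iff_eq_empty] at h
    rw [h, Finset.sum_empty] at hFsum
    norm_num at hFsum
  set S := ∑ θ', F θ' * σ₁ θ' m with hS
  have hSpos : 0 < S := Finset.sum_pos (fun θ' _ => mul_pos (hF θ') (hσ θ' m)) hne
  have hden : (∑ θ', F θ' * σχ θ' m) = S := by
    simp only [hσχ, mul_add]
    rw [Finset.sum_add_distrib]
    have h1 : (∑ θ', F θ' * (χ * S)) = χ * S := by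
      rw [← Finset.sum_mul, hFsum, one_mul]
    have h2 : (∑ θ', F θ' * ((1 - χ) * σ₁ θ' m)) = (1 - χ) * S := by
      rw [Finset.mul_sum]
      exact Finset.sum_congr rfl (fun θ' _ => by ring)
    rw [h1, h2]; ring
  rw [hμ, hden, ge_iff_le, le_div_iff₀ hSpos, hσχ]
  have : 0 ≤ F θ * ((1 - χ) * σ₁ θ m) :=
    mul_nonneg (hF θ).le (mul_nonneg (by linarith) (hσ θ m).le)
  nlinarith
end

section
/- If χ < 1 and the cost functions c(·|θ_L), c(·|θ_H) are continuous, strictly increasing, unbounded, with c(0|θ)=0 and c(e|θ_L) > c(e|θ_H) for all e > 0, then there exists e_H > 0 with c(e_H|θ_H) ≤ (1−χ)(θ_H−θ_L) ≤ c(e_H|θ_L); i.e., a separating χ-CSE exists for every χ ∈ [0,1). -/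
/-- For any χ < 1, a separating χ-CSE exists: there is a positive education level
satisfying both incentive compatibility conditions. -/
theorem separating_exists_for_partial_cursedness
    (θH θL χ : ℝ) (cH cL : ℝ → ℝ)
    (hθ : θL < θH) (hθL : 0 < θL)
    (hχ0 : 0 ≤ χ) (hχ1 : χ < 1)
    (hmonoH : StrictMonoOn cH (Set.Ici (0:ℝ)))
    (hmonoL : StrictMonoOn cL (Set.Ici (0:ℝ)))
    (hcontH : ContinuousOn cH (Set.Ici (0:ℝ)))
    (hcontL : ContinuousOn cL (Set.Ici (0:ℝ)))
    (hunbH : ∀ y : ℝ, ∃ e : ℝ, 0 ≤ e ∧ y ≤ cH e)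
    (hunbL : ∀ y : ℝ, ∃ e : ℝ, 0 ≤ e ∧ y ≤ cL e)
    (hc0H : cH 0 = 0) (hc0L : cL 0 = 0)
    (hLgtH : ∀ e : ℝ, 0 < e → cH e < cL e) :
    ∃ eH : ℝ, 0 < eH ∧ cH eH ≤ (1 - χ) * (θH - θL) ∧
      (1 - χ) * (θH - θL) ≤ cL eH := by
  set K : ℝ := (1 - χ) * (θH - θL) with hK
  have hKpos : 0 < K := mul_pos (by linarith) (by linarith)
  obtain ⟨b, hb0, hbK⟩ := hunbH K
  have hmem : K ∈ Set.Icc (cH 0) (cH b) := by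
    constructor <;> [skip; exact hbK]
    rw [hc0H]; exact hKpos.le
  have hsub := intermediate_value_Icc hb0 (hcontH.mono (Set.Icc_subset_Ici_self))
  obtain ⟨e, he, heK⟩ := hsub hmem
  have he0 : 0 < e := by
    rcases lt_or_eq_of_le he.1 with h | h
    · exact h
    · exfalso; rw [← h, hc0H] at heK; linarith
  exact ⟨e, he0, heK.le, by have := hLgtH e he0; linarith⟩
end

section
/- Define the weak set order: S' ≥_ws S if for every x ∈ S there is x' ∈ S' with x' ≥ x, and for every x' ∈ S' there is x ∈ S with x' ≥ x. Let 𝒮^χ = {e ≥ 0 : c(e|θ_H) ≤ (1−χ)(θ_H−θ_L) ≤ c(e|θ_L)} where both cost functions are continuous strictly increasing bijections from ℝ≥0 to ℝ≥0 with c(e|θ_L) ≥ c(e|θ_H). Then for any χ, χ' ∈ [0,1) with χ ≥ χ', we have 𝒮^{χ'} ≥_ws 𝒮^χ. -/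
/-- The set of separating χ-CSE education levels decreases in χ under the weak
set order of Che, Kim, and Kojima (Corollary 1). -/
theorem separating_set_decreasing_in_cursedness
    (θH θL : ℝ) (cH cL : ℝ → ℝ)
    (hθ : θL < θH) (hθL : 0 < θL)
    (hmonoH : StrictMonoOn cH (Set.Ici (0:ℝ)))
    (hmonoL : StrictMonoOn cL (Set.Ici (0:ℝ)))
    (hcontH : ContinuousOn cH (Set.Ici (0:ℝ)))
    (hcontL : ContinuousOn cL (Set.Ici (0:ℝ)))
    (hsurjH : ∀ y : ℝ, 0 ≤ y → ∃ e : ℝ, 0 ≤ e ∧ cH e = y)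
    (hsurjL : ∀ y : ℝ, 0 ≤ y → ∃ e : ℝ, 0 ≤ e ∧ cL e = y)
    (hc0H : cH 0 = 0) (hc0L : cL 0 = 0)
    (hLgeH : ∀ e : ℝ, 0 ≤ e → cH e ≤ cL e)
    (χ χ' : ℝ) (hχ : χ ∈ Set.Ico (0:ℝ) 1) (hχ' : χ' ∈ Set.Ico (0:ℝ) 1)
    (hge : χ' ≤ χ)
    (S : ℝ → Set ℝ)
    (hS : ∀ x : ℝ, S x = {e : ℝ | 0 ≤ e ∧ cH e ≤ (1 - x) * (θH - θL) ∧
      (1 - x) * (θH - θL) ≤ cL e}) :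
    (∀ e ∈ S χ, ∃ e' ∈ S χ', e ≤ e') ∧ (∀ e' ∈ S χ', ∃ e ∈ S χ, e ≤ e') := by
  set w : ℝ := (1 - χ) * (θH - θL) with hw
  set w' : ℝ := (1 - χ') * (θH - θL) with hw'
  have hθd : (0:ℝ) < θH - θL := by linarith
  have hw0 : 0 ≤ w := mul_nonneg (by linarith [hχ.2]) hθd.le
  have hw'0 : 0 ≤ w' := mul_nonneg (by linarith [hχ'.2]) hθd.le
  have hww' : w ≤ w' := by
    apply mul_le_mul_of_nonneg_right _ hθd.le
    linarith
  constructor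
  · intro e he
    rw [hS] at he
    obtain ⟨he0, heH, heL⟩ := he
    obtain ⟨a, ha0, haL⟩ := hsurjL w' hw'0
    rcases le_total a e with hae | hea
    · refine ⟨e, ?_, le_refl e⟩
      rw [hS]
      refine ⟨he0, le_trans heH hww', ?_⟩
      exact le_of_eq_of_le haL.symm <| hmonoL.monotoneOn (Set.mem_Ici.mpr ha0) (Set.mem_Ici.mpr he0) hae
    · refine ⟨a, ?_, hea⟩
      rw [hS]
      exact ⟨ha0, le_trans (hLgeH a ha0) haL.le, haL.ge⟩
  · intro e' he'
    rw [hS] at he'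
    obtain ⟨he0, heH, heL⟩ := he'
    obtain ⟨b, hb0, hbH⟩ := hsurjH w hw0
    rcases le_total e' b with heb | hbe
    · refine ⟨e', ?_, le_refl e'⟩
      rw [hS]
      refine ⟨he0, ?_, le_trans hww' heL⟩
      exact le_trans (hmonoH.monotoneOn (Set.mem_Ici.mpr he0) (Set.mem_Ici.mpr hb0) heb) hbH.le
    · refine ⟨b, ?_, hbe⟩
      rw [hS]
      exact ⟨hb0, hbH.le, le_trans hbH.ge (hLgeH b hb0)⟩
end

section
/- In the continuum-type model with c(e|θ) = e²/θ, for each χ ∈ [0,1) and each type θ ∈ [θ̲, θ̄], type θ's payoff from mimicking type t, namely U(t) = χE + (1−χ)t − (1/2)(1−χ)(t² − θ̲²)/θ, is uniquely maximized over t ∈ [θ̲, θ̄] at t = θ; hence truthful revelation is globally incentive compatible in the separating χ-CSE. -/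
/-- Continuum-type model: truthful revelation is globally incentive compatible in
the separating χ-CSE; the mimicking payoff U(t) is uniquely maximized at t = θ. -/
theorem continuum_global_IC
    (θl θb E χ θ : ℝ)
    (hθl : 0 < θl) (hlb : θl < θb)
    (hθ : θ ∈ Set.Icc θl θb)
    (hχ0 : 0 ≤ χ) (hχ1 : χ < 1)
    (U : ℝ → ℝ)
    (hU : ∀ t : ℝ, U t = χ * E + (1 - χ) * t
      - (1 / 2) * (1 - χ) * (t ^ 2 - θl ^ 2) / θ) :
    ∀ t ∈ Set.Icc θl θb, t ≠ θ → U t < U θ := by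
  intro t _ ht
  have hθ0 : 0 < θ := lt_of_lt_of_le hθl hθ.1
  have h1 : 0 < 1 - χ := by linarith
  have hsq : 0 < (θ - t) ^ 2 := by have := sub_ne_zero.mpr (Ne.symm ht); positivity
  have key : U θ - U t = (1 - χ) * (θ - t) ^ 2 / (2 * θ) := by
    rw [hU, hU]; field_simp; ring
  have : 0 < (1 - χ) * (θ - t) ^ 2 / (2 * θ) := by positivity
  linarith
end

section
/- In the continuum-type model, a constant education level ē ≥ 0 for all types is incentive compatible as a pooling χ-CSE (no type prefers deviating to e = 0 with off-path wage χE + (1−χ)θ̲, given pooled wage E) if and only if ē ≤ √((1−χ)(θ̲E − θ̲²)), where E = 𝔼[θ] > θ̲. -/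
/-- Continuum-type model: a constant education level ē is incentive compatible as
a pooling χ-CSE iff ē ≤ √((1−χ)(θ̲E − θ̲²)). -/
theorem continuum_pooling_characterization
    (θl θb E χ ebar : ℝ)
    (hθl : 0 < θl) (hlb : θl ≤ θb) (hE : θl < E)
    (hχ : χ ∈ Set.Icc (0:ℝ) 1) (hebar : 0 ≤ ebar) :
    (∀ θ ∈ Set.Icc θl θb, E - ebar ^ 2 / θ ≥ χ * E + (1 - χ) * θl) ↔
      ebar ≤ Real.sqrt ((1 - χ) * (θl * E - θl ^ 2)) := by
  obtain ⟨hχ0, hχ1⟩ := hχ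
  have hkey : ebar ≤ Real.sqrt ((1 - χ) * (θl * E - θl ^ 2)) ↔
      ebar ^ 2 ≤ (1 - χ) * (θl * E - θl ^ 2) := by
    rw [Real.le_sqrt hebar (mul_nonneg (by linarith) (by nlinarith))]
  constructor
  · intro h
    have := h θl ⟨le_refl _, hlb⟩
    rw [hkey]
    have h2 : ebar ^ 2 / θl ≤ (1 - χ) * (E - θl) := by nlinarith
    rw [div_le_iff₀ hθl] at h2
    nlinarith
  · intro h θ hθ
    have hθpos : 0 < θ := lt_of_lt_of_le hθl hθ.1
    have h2 : ebar ^ 2 ≤ (1 - χ) * (θl * E - θl ^ 2) := by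
      rw [hkey] at h; exact h
    have h3 : ebar ^ 2 / θ ≤ ebar ^ 2 / θl :=
      div_le_div_of_nonneg_left (by positivity) hθl hθ.1
    have h4 : ebar ^ 2 / θl ≤ (1 - χ) * (E - θl) := by
      rw [div_le_iff₀ hθl]; nlinarith
    nlinarith
end
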